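/- arXiv:1909.08969 — 3 statements merged into one kernel-verified Lean document; each statement's English description precedes it below -/
import Mathlib

section
/- Let k ≥ 1, let w_l : ℕ → ℝ with w_l(n) ≥ 0 be the work arriving to sub-system l in slot n, let r_l ≥ 0 with Σ_{l=1}^k r_l = 1, and let b_l be real bucket sizes with b = Σ_{l=1}^k b_l. Define the unfinished-work sequences by the Lindley recursions U(0) = 0, U(n+1) = max(0, U(n) + Σ_{l=1}^k w_l(n) − 1) and U_l(0) = 0, U_l(n+1) = max(0, U_l(n) + w_l(n) − r_l), and the cumulative delay sums S(n) = Σ_{m=0}^{n−1} ⌈max(0, U(m) − b)⌉ and S^{(k)}(n) = Σ_{m=0}^{n−1} Σ_{l=1}^k ⌈max(0, U_l(m) − b_l)⌉. Then for all n, S(n) ≤ S^{(k)}(n): the cumulative job delay accrued by the one-bucket system (rate 1, bucket size b) never exceeds that accrued by the k sub-bucket systems (rates r_l, bucket sizes b_l). (Discrete-time version of Theorem 1.) -/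
/-!
The pooled queue never holds more unfinished work than the `k` sub-queues together: its
Lindley step is `x ↦ max 0 (x + Σ w_l − Σ r_l)`, and `max 0` is monotone and subadditive, so
`U ≤ Σ U_l` propagates from slot to slot. The number of waiting jobs `⌈max 0 (U − Σ b_l)⌉` is
then bounded slot by slot using subadditivity of `max 0` and of the ceiling once more.
-/

open Finset

theorem max_zero_sum_le_sum_max_zero {ι α : Type*} [AddCommMonoid α] [LinearOrder α]
    [IsOrderedAddMonoid α] (s : Finset ι) (f : ι → α) :
    max 0 (∑ i ∈ s, f i) ≤ ∑ i ∈ s, max 0 (f i) :=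
  le_sum_of_subadditive (max 0) (max_self 0).le
    (fun x y => by simpa using max_add_add_le_max_add_max (a := (0 : α)) (b := 0)) s f

theorem max_zero_le_sum_max_zero_of_le {ι α : Type*} [AddCommMonoid α] [LinearOrder α]
    [IsOrderedAddMonoid α] {s : Finset ι} {f : ι → α} {a : α} (h : a ≤ ∑ i ∈ s, f i) :
    max 0 a ≤ ∑ i ∈ s, max 0 (f i) :=
  (max_le_max_left 0 h).trans (max_zero_sum_le_sum_max_zero s f)

theorem Int.ceil_sum_le_sum_ceil {ι α : Type*} [Ring α] [LinearOrder α] [IsStrictOrderedRing α]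
    [FloorRing α] (s : Finset ι) (f : ι → α) :
    ⌈∑ i ∈ s, f i⌉ ≤ ∑ i ∈ s, ⌈f i⌉ :=
  le_sum_of_subadditive (fun x : α => ⌈x⌉) (by simp) Int.ceil_add_le s f

theorem lindley_le_sum_lindley {ι : Type*} [Fintype ι] (w : ι → ℕ → ℝ) (r : ι → ℝ)
    (U : ℕ → ℝ) (Ul : ι → ℕ → ℝ) (h0 : U 0 ≤ ∑ l, Ul l 0)
    (hU : ∀ n, U (n + 1) = max 0 (U n + ∑ l, w l n - ∑ l, r l))
    (hUl : ∀ l n, Ul l (n + 1) = max 0 (Ul l n + w l n - r l)) (n : ℕ) :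
    U n ≤ ∑ l, Ul l n := by
  induction n with
  | zero => exact h0
  | succ n ih =>
    have hstep : U n + ∑ l, w l n - ∑ l, r l ≤ ∑ l, (Ul l n + w l n - r l) := by
      rw [sum_sub_distrib, sum_add_distrib]
      linarith
    simpa only [hU, hUl] using max_zero_le_sum_max_zero_of_le hstep

theorem cumulative_delay_one_bucket_le_k_buckets_discrete_general
    (k : ℕ)
    (w : Fin k → ℕ → ℝ)
    (r : Fin k → ℝ) (hrsum : ∑ l, r l = 1)
    (b : Fin k → ℝ) (btot : ℝ) (hb : btot = ∑ l, b l)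
    (U : ℕ → ℝ) (hU0 : U 0 = 0)
    (hU : ∀ n, U (n + 1) = max 0 (U n + (∑ l, w l n) - 1))
    (Ul : Fin k → ℕ → ℝ) (hUl0 : ∀ l, Ul l 0 = 0)
    (hUl : ∀ l n, Ul l (n + 1) = max 0 (Ul l n + w l n - r l)) :
    ∀ n : ℕ,
      (∑ m ∈ Finset.range n, (⌈max 0 (U m - btot)⌉ : ℤ))
        ≤ ∑ m ∈ Finset.range n, ∑ l, (⌈max 0 (Ul l m - b l)⌉ : ℤ) := by
  have hwork (m : ℕ) : U m ≤ ∑ l, Ul l m :=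
    lindley_le_sum_lindley w r U Ul (by simp [hU0, hUl0]) (by simpa only [hrsum] using hU) hUl m
  intro n
  refine sum_le_sum fun m _ => ?_
  have hexcess : U m - btot ≤ ∑ l, (Ul l m - b l) := by
    rw [sum_sub_distrib, hb]
    linarith [hwork m]
  calc ⌈max 0 (U m - btot)⌉
      ≤ ⌈∑ l, max 0 (Ul l m - b l)⌉ := Int.ceil_le_ceil (max_zero_le_sum_max_zero_of_le hexcess)
    _ ≤ ∑ l, ⌈max 0 (Ul l m - b l)⌉ := Int.ceil_sum_le_sum_ceil _ _

/-- Discrete-time version of Theorem 1: the cumulative job delay accrued by the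
one-bucket system (rate 1, bucket size `b`) never exceeds that accrued by the
`k` sub-bucket systems (rates `r l`, bucket sizes `b l`). -/
theorem cumulative_delay_one_bucket_le_k_buckets_discrete
    (k : ℕ) (hk : 1 ≤ k)
    (w : Fin k → ℕ → ℝ) (hw : ∀ l n, 0 ≤ w l n)
    (r : Fin k → ℝ) (hr : ∀ l, 0 ≤ r l) (hrsum : ∑ l, r l = 1)
    (b : Fin k → ℝ) (btot : ℝ) (hb : btot = ∑ l, b l)
    (U : ℕ → ℝ) (hU0 : U 0 = 0)
    (hU : ∀ n, U (n + 1) = max 0 (U n + (∑ l, w l n) - 1))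
    (Ul : Fin k → ℕ → ℝ) (hUl0 : ∀ l, Ul l 0 = 0)
    (hUl : ∀ l n, Ul l (n + 1) = max 0 (Ul l n + w l n - r l)) :
    ∀ n : ℕ,
      (∑ m ∈ Finset.range n, (⌈max 0 (U m - btot)⌉ : ℤ))
        ≤ ∑ m ∈ Finset.range n, ∑ l, (⌈max 0 (Ul l m - b l)⌉ : ℤ) :=
  cumulative_delay_one_bucket_le_k_buckets_discrete_general k w r hrsum b btot hb U hU0 hU Ul hUl0
    hUl
end

section
/- Let k ≥ 1, let W_l : ℝ → ℝ for l = 1,…,k be nondecreasing cumulative arrival functions, let r_l ≥ 0 with Σ_{l=1}^k r_l = 1, and let b_l be real bucket sizes with b = Σ_{l=1}^k b_l. Define W = Σ_{l=1}^k W_l, U(t) = sup_{0 ≤ s ≤ t} (W(t) − W(s) − (t − s)), U_l(t) = sup_{0 ≤ s ≤ t} (W_l(t) − W_l(s) − r_l·(t − s)), N(t) = ⌈max(0, U(t) − b)⌉ and N_l(t) = ⌈max(0, U_l(t) − b_l)⌉. Assume the functions t ↦ N(t) and t ↦ N_l(t) (l = 1,…,k) are measurable on [0, t₀] and integrable there.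 Then the cumulative delays S(t₀) = ∫₀^{t₀} N(u) du and S^{(k)}(t₀) = ∫₀^{t₀} Σ_{l=1}^k N_l(u) du satisfy S(t₀) ≤ S^{(k)}(t₀) for every t₀ ≥ 0. (Theorem 1: splitting a token bucket (1, b) into k sub-token buckets (r_l, b_l) with Σ r_l = 1 and Σ b_l = b can never decrease the sum of job latencies, irrespective of how jobs are distributed among the sub-buckets.) -/
/-!
Since `∑ l, r l = 1`, for every `s` the term `W t - W s - (t - s)` of the aggregate queue is the
sum of the per-bucket terms `W l t - W l s - r l * (t - s)`, so `U t ≤ ∑ l, Ul l t`. Subtracting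
`btot = ∑ l, b l`, the positive part and the ceiling are both subadditive, which gives
`N t ≤ ∑ l, Nl l t` for every `t ≥ 0`; integrating over `[0, t₀]` yields the claim.
-/

open MeasureTheory Set

theorem Int.ceil_sum_le {ι : Type*} (s : Finset ι) (f : ι → ℝ) :
    ⌈∑ i ∈ s, f i⌉ ≤ ∑ i ∈ s, ⌈f i⌉ := by
  classical
  induction s using Finset.induction with
  | empty => simp
  | insert i s hi ih =>
    rw [Finset.sum_insert hi, Finset.sum_insert hi]
    exact (Int.ceil_add_le _ _).trans (add_le_add le_rfl ih)

theorem ceil_max_zero_sub_sum_le {ι : Type*} (s : Finset ι) {y : ℝ} (x b : ι → ℝ)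
    (hy : y ≤ ∑ i ∈ s, x i) :
    ⌈max 0 (y - ∑ i ∈ s, b i)⌉ ≤ ∑ i ∈ s, ⌈max 0 (x i - b i)⌉ := by
  have hmax : max 0 (y - ∑ i ∈ s, b i) ≤ ∑ i ∈ s, max 0 (x i - b i) := by
    refine max_le (Finset.sum_nonneg fun i _ => le_max_left _ _) ?_
    calc y - ∑ i ∈ s, b i ≤ ∑ i ∈ s, (x i - b i) := by rw [Finset.sum_sub_distrib]; linarith
      _ ≤ ∑ i ∈ s, max 0 (x i - b i) := Finset.sum_le_sum fun i _ => le_max_right _ _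
  exact (Int.ceil_le_ceil hmax).trans (Int.ceil_sum_le s _)

theorem bddAbove_reich_image {W : ℝ → ℝ} {r : ℝ} (t : ℝ) (hW : Monotone W) (hr : 0 ≤ r) :
    BddAbove ((fun s => W t - W s - r * (t - s)) '' Icc 0 t) := by
  refine ⟨W t - W 0, ?_⟩
  rintro _ ⟨s, hs, rfl⟩
  have hWs : W 0 ≤ W s := hW hs.1
  have hrs : 0 ≤ r * (t - s) := mul_nonneg hr (sub_nonneg.mpr hs.2)
  dsimp only
  linarith

theorem reich_sum_le_sum_reich {ι : Type*} {t : ℝ} (S : Finset ι) (W : ι → ℝ → ℝ)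
    (hW : ∀ i, Monotone (W i)) (r : ι → ℝ) (hr : ∀ i, 0 ≤ r i) (ht : 0 ≤ t) :
    sSup ((fun s => ∑ i ∈ S, W i t - ∑ i ∈ S, W i s - (∑ i ∈ S, r i) * (t - s)) '' Icc 0 t) ≤
      ∑ i ∈ S, sSup ((fun s => W i t - W i s - r i * (t - s)) '' Icc 0 t) := by
  refine csSup_le ((nonempty_Icc.mpr ht).image _) ?_
  rintro _ ⟨s, hs, rfl⟩
  have hsplit : ∑ i ∈ S, W i t - ∑ i ∈ S, W i s - (∑ i ∈ S, r i) * (t - s) =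
      ∑ i ∈ S, (W i t - W i s - r i * (t - s)) := by
    rw [Finset.sum_sub_distrib, Finset.sum_sub_distrib, Finset.sum_mul]
  dsimp only
  rw [hsplit]
  exact Finset.sum_le_sum fun i _ => le_csSup (bddAbove_reich_image t (hW i) (hr i)) ⟨s, hs, rfl⟩

theorem cumulative_delay_one_bucket_le_k_buckets_general
    (k : ℕ)
    (W : Fin k → ℝ → ℝ) (hW : ∀ l, Monotone (W l))
    (r : Fin k → ℝ) (hr : ∀ l, 0 ≤ r l) (hrsum : ∑ l, r l = 1)
    (b : Fin k → ℝ) (btot : ℝ) (hb : btot = ∑ l, b l)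
    (U : ℝ → ℝ)
    (hU : ∀ t, U t =
      sSup ((fun s => (∑ l, W l t) - (∑ l, W l s) - (t - s)) '' Set.Icc (0 : ℝ) t))
    (Ul : Fin k → ℝ → ℝ)
    (hUl : ∀ l t, Ul l t =
      sSup ((fun s => W l t - W l s - r l * (t - s)) '' Set.Icc (0 : ℝ) t))
    (N : ℝ → ℤ) (hN : ∀ t, N t = ⌈max 0 (U t - btot)⌉)
    (Nl : Fin k → ℝ → ℤ) (hNl : ∀ l t, Nl l t = ⌈max 0 (Ul l t - b l)⌉)
    (t₀ : ℝ) (ht₀ : 0 ≤ t₀)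
    (hNint : IntervalIntegrable (fun u => (N u : ℝ)) volume 0 t₀)
    (hNlint : ∀ l, IntervalIntegrable (fun u => (Nl l u : ℝ)) volume 0 t₀) :
    (∫ u in (0 : ℝ)..t₀, (N u : ℝ)) ≤ ∫ u in (0 : ℝ)..t₀, ∑ l, (Nl l u : ℝ) := by
  have hU_le : ∀ t, 0 ≤ t → U t ≤ ∑ l, Ul l t := fun t ht => by
    simpa only [hU, hUl, hrsum, one_mul] using reich_sum_le_sum_reich Finset.univ W hW r hr ht
  have hN_le : ∀ t, 0 ≤ t → (N t : ℝ) ≤ ∑ l, (Nl l t : ℝ) := fun t ht => by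
    have h := ceil_max_zero_sub_sum_le Finset.univ (fun l => Ul l t) b (hU_le t ht)
    rw [← hb] at h
    simp only [hN, hNl]
    exact_mod_cast h
  have hsum_int : IntervalIntegrable (fun u => ∑ l, (Nl l u : ℝ)) volume 0 t₀ := by
    simpa only [Finset.sum_fn] using IntervalIntegrable.sum Finset.univ fun l _ => hNlint l
  exact intervalIntegral.integral_mono_on ht₀ hNint hsum_int fun u hu => hN_le u hu.1

/-- Theorem 1: splitting a token bucket `(1, b)` into `k` sub-token buckets
`(r l, b l)` with `∑ r l = 1` and `∑ b l = b` can never decrease the sum of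
job latencies, irrespective of how jobs are distributed among the sub-buckets. -/
theorem cumulative_delay_one_bucket_le_k_buckets
    (k : ℕ) (hk : 1 ≤ k)
    (W : Fin k → ℝ → ℝ) (hW : ∀ l, Monotone (W l))
    (r : Fin k → ℝ) (hr : ∀ l, 0 ≤ r l) (hrsum : ∑ l, r l = 1)
    (b : Fin k → ℝ) (btot : ℝ) (hb : btot = ∑ l, b l)
    (U : ℝ → ℝ)
    (hU : ∀ t, U t =
      sSup ((fun s => (∑ l, W l t) - (∑ l, W l s) - (t - s)) '' Set.Icc (0 : ℝ) t))
    (Ul : Fin k → ℝ → ℝ)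
    (hUl : ∀ l t, Ul l t =
      sSup ((fun s => W l t - W l s - r l * (t - s)) '' Set.Icc (0 : ℝ) t))
    (N : ℝ → ℤ) (hN : ∀ t, N t = ⌈max 0 (U t - btot)⌉)
    (Nl : Fin k → ℝ → ℤ) (hNl : ∀ l t, Nl l t = ⌈max 0 (Ul l t - b l)⌉)
    (t₀ : ℝ) (ht₀ : 0 ≤ t₀)
    (hNmeas : Measurable fun u => (N u : ℝ))
    (hNint : IntervalIntegrable (fun u => (N u : ℝ)) volume 0 t₀)
    (hNlmeas : ∀ l, Measurable fun u => (Nl l u : ℝ))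
    (hNlint : ∀ l, IntervalIntegrable (fun u => (Nl l u : ℝ)) volume 0 t₀) :
    (∫ u in (0 : ℝ)..t₀, (N u : ℝ)) ≤ ∫ u in (0 : ℝ)..t₀, ∑ l, (Nl l u : ℝ) :=
  cumulative_delay_one_bucket_le_k_buckets_general k W hW r hr hrsum b btot hb U hU Ul hUl N hN Nl
    hNl t₀ ht₀ hNint hNlint
end

section
/- Let w₁, w₂ : ℕ → ℝ with w₁(n), w₂(n) ≥ 0 and let r₁, r₂ ≥ 0 with r₁ + r₂ = 1. Define the Lindley recursions U(0) = 0, U(n+1) = max(0, U(n) + w₁(n) + w₂(n) − 1), and U_l(0) = 0, U_l(n+1) = max(0, U_l(n) + w_l(n) − r_l) for l = 1, 2. Then for all n, U(n) ≤ U₁(n) + U₂(n). (Discrete-time version of Lemma 1 for the two-queue case.) -/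
section Lindley

variable {α : Type*} [AddCommGroup α] [LinearOrder α] [IsOrderedAddMonoid α]

theorem max_zero_add_le_max_zero_add_max_zero (a b : α) :
    max 0 (a + b) ≤ max 0 a + max 0 b := by
  simpa only [add_zero] using max_add_add_le_max_add_max (a := (0 : α)) (b := 0) (c := a) (d := b)

theorem lindley_pooled_le_add {w₁ w₂ U U₁ U₂ : ℕ → α} {r r₁ r₂ : α} (hr : r₁ + r₂ ≤ r)
    (h0 : U 0 ≤ U₁ 0 + U₂ 0)
    (hU : ∀ n, U (n + 1) = max 0 (U n + w₁ n + w₂ n - r))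
    (hU₁ : ∀ n, U₁ (n + 1) = max 0 (U₁ n + w₁ n - r₁))
    (hU₂ : ∀ n, U₂ (n + 1) = max 0 (U₂ n + w₂ n - r₂)) :
    ∀ n, U n ≤ U₁ n + U₂ n := by
  intro n
  induction n with
  | zero => exact h0
  | succ n ih =>
    have hstep : U n + w₁ n + w₂ n - r ≤ (U₁ n + w₁ n - r₁) + (U₂ n + w₂ n - r₂) := by
      calc U n + w₁ n + w₂ n - r ≤ U₁ n + U₂ n + w₁ n + w₂ n - (r₁ + r₂) := by
            gcongr
        _ = (U₁ n + w₁ n - r₁) + (U₂ n + w₂ n - r₂) := by abel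
    rw [hU, hU₁, hU₂]
    exact (max_le_max le_rfl hstep).trans (max_zero_add_le_max_zero_add_max_zero _ _)

end Lindley

theorem one_queue_le_two_queues_lindley_general
    (w₁ w₂ : ℕ → ℝ)
    (r₁ r₂ : ℝ) (hrsum : r₁ + r₂ = 1)
    (U : ℕ → ℝ) (hU0 : U 0 = 0)
    (hU : ∀ n, U (n + 1) = max 0 (U n + w₁ n + w₂ n - 1))
    (U₁ : ℕ → ℝ) (hU₁0 : U₁ 0 = 0)
    (hU₁ : ∀ n, U₁ (n + 1) = max 0 (U₁ n + w₁ n - r₁))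
    (U₂ : ℕ → ℝ) (hU₂0 : U₂ 0 = 0)
    (hU₂ : ∀ n, U₂ (n + 1) = max 0 (U₂ n + w₂ n - r₂)) :
    ∀ n, U n ≤ U₁ n + U₂ n :=
  lindley_pooled_le_add hrsum.le (by simp [hU0, hU₁0, hU₂0]) hU hU₁ hU₂

/-- Discrete-time version of Lemma 1 for the two-queue case. -/
theorem one_queue_le_two_queues_lindley
    (w₁ w₂ : ℕ → ℝ) (hw₁ : ∀ n, 0 ≤ w₁ n) (hw₂ : ∀ n, 0 ≤ w₂ n)
    (r₁ r₂ : ℝ) (hr₁ : 0 ≤ r₁) (hr₂ : 0 ≤ r₂) (hrsum : r₁ + r₂ = 1)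
    (U : ℕ → ℝ) (hU0 : U 0 = 0)
    (hU : ∀ n, U (n + 1) = max 0 (U n + w₁ n + w₂ n - 1))
    (U₁ : ℕ → ℝ) (hU₁0 : U₁ 0 = 0)
    (hU₁ : ∀ n, U₁ (n + 1) = max 0 (U₁ n + w₁ n - r₁))
    (U₂ : ℕ → ℝ) (hU₂0 : U₂ 0 = 0)
    (hU₂ : ∀ n, U₂ (n + 1) = max 0 (U₂ n + w₂ n - r₂)) :
    ∀ n, U n ≤ U₁ n + U₂ n :=
  one_queue_le_two_queues_lindley_general w₁ w₂ r₁ r₂ hrsum U hU0 hU U₁ hU₁0 hU₁ U₂ hU₂0 hU₂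
end
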